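/- (Theorem 1C: necessary condition for the fractional derivative–difference Hardy–Sobolev inequality.) Let d ≥ 1 be an integer, p, s ∈ (1,∞), and α₁, α₂, β, μ ∈ ℝ. Suppose there is a constant K ∈ (0,∞) such that R_{p,α₁,α₂,β}(u) ≤ K · (∫_{ℝ^d} |∇u(x)|^s |x|^{−μ} dx)^{1/s} for every u ∈ C_c^∞(ℝ^d), and suppose there exists u₀ ∈ C_c^∞(ℝ^d) with R_{p,α₁,α₂,β}(u₀) > 0 and ∫_{ℝ^d} |∇u₀(x)|^s |x|^{−μ} dx < ∞. Then (d−μ)/s − 1 = (2d+α₁+α₂−β)/p. -/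

import Mathlib

open MeasureTheory ENNReal

/-- `R_{p,α₁,α₂,β}(u) = (∫∫ |u(x)−u(y)|^p |x|^{α₁} |y|^{α₂} |x−y|^{−β} dx dy)^{1/p}`,
with values in `[0,∞]`. -/
noncomputable def HSright (d : ℕ) (p α₁ α₂ β : ℝ)
    (u : EuclideanSpace ℝ (Fin d) → ℝ) : ℝ≥0∞ :=
  (∫⁻ x : EuclideanSpace ℝ (Fin d), ∫⁻ y : EuclideanSpace ℝ (Fin d),
      ENNReal.ofReal (|u x - u y| ^ p * ‖x‖ ^ α₁ * ‖y‖ ^ α₂ * ‖x - y‖ ^ (-β))) ^ (1 / p)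

/-- Weighted gradient functional `∫_{ℝ^d} |∇u(x)|^s |x|^{−μ} dx`, in `[0,∞]`. -/
noncomputable def HSgrad (d : ℕ) (s μ : ℝ)
    (u : EuclideanSpace ℝ (Fin d) → ℝ) : ℝ≥0∞ :=
  ∫⁻ x : EuclideanSpace ℝ (Fin d),
    ENNReal.ofReal (‖gradient u x‖ ^ s * ‖x‖ ^ (-μ))

section Aux

variable {d : ℕ}

/-- Change of variables `x ↦ r • x` for lower integrals on `ℝ^d`. -/
private lemma aux_smul_lintegral {r : ℝ} (hr : 0 < r)
    {f : EuclideanSpace ℝ (Fin d) → ℝ≥0∞} (hf : Measurable f) :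
    ∫⁻ x : EuclideanSpace ℝ (Fin d), f (r • x)
      = ENNReal.ofReal (r ^ (-(d : ℝ))) * ∫⁻ x, f x := by
  have h1 : (∫⁻ x : EuclideanSpace ℝ (Fin d), f (r • x))
      = ∫⁻ x, f x ∂(Measure.map (fun x : EuclideanSpace ℝ (Fin d) => r • x) volume) :=
    (lintegral_map hf (measurable_const_smul r)).symm
  rw [h1, MeasureTheory.Measure.map_addHaar_smul volume hr.ne', lintegral_smul_measure]
  congr 2
  rw [finrank_euclideanSpace_fin, abs_inv, abs_of_pos (pow_pos hr d),
    ← Real.rpow_natCast r d, Real.rpow_neg hr.le]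

private lemma norm_gradient_eq (f : EuclideanSpace ℝ (Fin d) → ℝ)
    (z : EuclideanSpace ℝ (Fin d)) : ‖gradient f z‖ = ‖fderiv ℝ f z‖ := by
  rw [show gradient f z
      = (InnerProductSpace.toDual ℝ (EuclideanSpace ℝ (Fin d))).symm (fderiv ℝ f z) from rfl]
  exact LinearIsometryEquiv.norm_map _ _

private lemma norm_gradient_comp_smul (u : EuclideanSpace ℝ (Fin d) → ℝ)
    (hu : ContDiff ℝ (⊤ : ℕ∞) u) (c : ℝ) (x : EuclideanSpace ℝ (Fin d)) :
    ‖gradient (fun y => u (c • y)) x‖ = |c| * ‖gradient u (c • x)‖ := by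
  rw [norm_gradient_eq, norm_gradient_eq]
  set L : EuclideanSpace ℝ (Fin d) →L[ℝ] EuclideanSpace ℝ (Fin d) :=
    c • ContinuousLinearMap.id ℝ _ with hL
  have h1 : (fun y => u (c • y)) = u ∘ ⇑L := by
    funext y; simp [hL]
  rw [h1, fderiv_comp x ((hu.differentiable (by simp)).differentiableAt) L.differentiableAt,
    L.fderiv]
  have h2 : L x = c • x := by simp [hL]
  have h3 : (fderiv ℝ u (L x)).comp L = c • fderiv ℝ u (L x) := by
    ext v
    simp [hL, (fderiv ℝ u (L x)).map_smul]
  rw [h3, h2, norm_smul, Real.norm_eq_abs]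

private lemma gradient_continuous (u : EuclideanSpace ℝ (Fin d) → ℝ)
    (hu : ContDiff ℝ (⊤ : ℕ∞) u) : Continuous (gradient u) := by
  have h := hu.continuous_fderiv (by simp)
  show Continuous fun z =>
    (InnerProductSpace.toDual ℝ (EuclideanSpace ℝ (Fin d))).symm (fderiv ℝ u z)
  exact (LinearIsometryEquiv.continuous _).comp h

private lemma HSgrad_comp_smul (s μ : ℝ) (u : EuclideanSpace ℝ (Fin d) → ℝ)
    (hu : ContDiff ℝ (⊤ : ℕ∞) u) {c : ℝ} (hc : 0 < c) :
    HSgrad d s μ (fun y => u (c • y))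
      = ENNReal.ofReal (c ^ (s + μ + -(d : ℝ))) * HSgrad d s μ u := by
  have hgc : Continuous (gradient u) := gradient_continuous u hu
  have hmeas : Measurable fun z : EuclideanSpace ℝ (Fin d) =>
      ENNReal.ofReal (‖gradient u z‖ ^ s * ‖z‖ ^ (-μ)) := by
    exact (((hgc.norm.measurable).pow measurable_const).mul
      (measurable_norm.pow measurable_const)).ennreal_ofReal
  have key : ∀ x : EuclideanSpace ℝ (Fin d),
      ENNReal.ofReal (‖gradient (fun y => u (c • y)) x‖ ^ s * ‖x‖ ^ (-μ))
        = ENNReal.ofReal (c ^ (s + μ)) *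
            ENNReal.ofReal (‖gradient u (c • x)‖ ^ s * ‖c • x‖ ^ (-μ)) := by
    intro x
    rw [norm_gradient_comp_smul u hu c x, abs_of_pos hc,
      ← ENNReal.ofReal_mul (by positivity)]
    congr 1
    have hnx : ‖c • x‖ ^ (-μ) = c ^ (-μ) * ‖x‖ ^ (-μ) := by
      rw [norm_smul, Real.norm_eq_abs, abs_of_pos hc, Real.mul_rpow hc.le (norm_nonneg _)]
    have hgx : (c * ‖gradient u (c • x)‖) ^ s = c ^ s * ‖gradient u (c • x)‖ ^ s :=
      Real.mul_rpow hc.le (norm_nonneg _)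
    have hone : c ^ (s + μ) * c ^ (-μ) = c ^ s := by
      rw [← Real.rpow_add hc]; congr 1; ring
    rw [hgx, hnx]
    linear_combination (-(‖gradient u (c • x)‖ ^ s * ‖x‖ ^ (-μ))) * hone
  unfold HSgrad
  calc ∫⁻ x : EuclideanSpace ℝ (Fin d),
        ENNReal.ofReal (‖gradient (fun y => u (c • y)) x‖ ^ s * ‖x‖ ^ (-μ))
      = ∫⁻ x, ENNReal.ofReal (c ^ (s + μ)) *
          ENNReal.ofReal (‖gradient u (c • x)‖ ^ s * ‖c • x‖ ^ (-μ)) := by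
        exact lintegral_congr key
    _ = ENNReal.ofReal (c ^ (s + μ)) *
          ∫⁻ x, ENNReal.ofReal (‖gradient u (c • x)‖ ^ s * ‖c • x‖ ^ (-μ)) :=
        lintegral_const_mul' _ _ ENNReal.ofReal_ne_top
    _ = ENNReal.ofReal (c ^ (s + μ)) * (ENNReal.ofReal (c ^ (-(d : ℝ))) *
          ∫⁻ x, ENNReal.ofReal (‖gradient u x‖ ^ s * ‖x‖ ^ (-μ))) := by
        rw [aux_smul_lintegral hc hmeas]
    _ = ENNReal.ofReal (c ^ (s + μ + -(d : ℝ))) *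
          ∫⁻ x, ENNReal.ofReal (‖gradient u x‖ ^ s * ‖x‖ ^ (-μ)) := by
        rw [← mul_assoc, ← ENNReal.ofReal_mul (by positivity), ← Real.rpow_add hc]

private noncomputable def Hker (d : ℕ) (p α₁ α₂ β : ℝ)
    (u : EuclideanSpace ℝ (Fin d) → ℝ) (x y : EuclideanSpace ℝ (Fin d)) : ℝ≥0∞ :=
  ENNReal.ofReal (|u x - u y| ^ p * ‖x‖ ^ α₁ * ‖y‖ ^ α₂ * ‖x - y‖ ^ (-β))

private lemma HSright_eq (p α₁ α₂ β : ℝ) (u : EuclideanSpace ℝ (Fin d) → ℝ) :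
    HSright d p α₁ α₂ β u = (∫⁻ x : EuclideanSpace ℝ (Fin d), ∫⁻ y : EuclideanSpace ℝ (Fin d),
      Hker d p α₁ α₂ β u x y) ^ (1 / p) := rfl

private lemma Hker_measurable (p α₁ α₂ β : ℝ) {u : EuclideanSpace ℝ (Fin d) → ℝ}
    (hu : Continuous u) :
    Measurable fun q : EuclideanSpace ℝ (Fin d) × EuclideanSpace ℝ (Fin d) =>
      Hker d p α₁ α₂ β u q.1 q.2 := by
  apply Measurable.ennreal_ofReal
  exact ((((((hu.comp continuous_fst).sub (hu.comp continuous_snd)).abs.measurable).pow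
      measurable_const).mul ((continuous_fst.norm.measurable).pow measurable_const)).mul
      ((continuous_snd.norm.measurable).pow measurable_const)).mul
      (((continuous_fst.sub continuous_snd).norm.measurable).pow measurable_const)

set_option maxHeartbeats 1000000 in
private lemma Hker_integral_smul (p α₁ α₂ β : ℝ) (u : EuclideanSpace ℝ (Fin d) → ℝ)
    (hu : Continuous u) {c : ℝ} (hc : 0 < c) :
    (∫⁻ x : EuclideanSpace ℝ (Fin d), ∫⁻ y : EuclideanSpace ℝ (Fin d),
        Hker d p α₁ α₂ β (fun z => u (c • z)) x y)
      = ENNReal.ofReal (c ^ (β - α₁ - α₂ + -(d : ℝ) + -(d : ℝ))) *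
          ∫⁻ x : EuclideanSpace ℝ (Fin d), ∫⁻ y : EuclideanSpace ℝ (Fin d),
            Hker d p α₁ α₂ β u x y := by
  have hH := Hker_measurable (d := d) p α₁ α₂ β hu
  have pointwise : ∀ x y : EuclideanSpace ℝ (Fin d),
      Hker d p α₁ α₂ β (fun z => u (c • z)) x y
        = ENNReal.ofReal (c ^ (β - α₁ - α₂)) * Hker d p α₁ α₂ β u (c • x) (c • y) := by
    intro x y
    unfold Hker
    rw [← ENNReal.ofReal_mul (by positivity)]
    congr 1
    have hX : ‖c • x‖ ^ α₁ = c ^ α₁ * ‖x‖ ^ α₁ := by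
      rw [norm_smul, Real.norm_eq_abs, abs_of_pos hc, Real.mul_rpow hc.le (norm_nonneg _)]
    have hY : ‖c • y‖ ^ α₂ = c ^ α₂ * ‖y‖ ^ α₂ := by
      rw [norm_smul, Real.norm_eq_abs, abs_of_pos hc, Real.mul_rpow hc.le (norm_nonneg _)]
    have hZ : ‖c • x - c • y‖ ^ (-β) = c ^ (-β) * ‖x - y‖ ^ (-β) := by
      rw [← smul_sub, norm_smul, Real.norm_eq_abs, abs_of_pos hc,
        Real.mul_rpow hc.le (norm_nonneg _)]
    have hone : c ^ (β - α₁ - α₂) * c ^ α₁ * c ^ α₂ * c ^ (-β) = 1 := by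
      rw [← Real.rpow_add hc, ← Real.rpow_add hc, ← Real.rpow_add hc,
        show β - α₁ - α₂ + α₁ + α₂ + -β = 0 by ring, Real.rpow_zero]
    rw [hX, hY, hZ]
    linear_combination (-(|u (c • x) - u (c • y)| ^ p * ‖x‖ ^ α₁ * ‖y‖ ^ α₂ *
      ‖x - y‖ ^ (-β))) * hone
  have step1 : (∫⁻ x : EuclideanSpace ℝ (Fin d), ∫⁻ y : EuclideanSpace ℝ (Fin d),
        Hker d p α₁ α₂ β (fun z => u (c • z)) x y)
      = ENNReal.ofReal (c ^ (β - α₁ - α₂)) *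
          ∫⁻ x : EuclideanSpace ℝ (Fin d), ∫⁻ y : EuclideanSpace ℝ (Fin d),
            Hker d p α₁ α₂ β u (c • x) (c • y) := by
    rw [← lintegral_const_mul' _ _ ENNReal.ofReal_ne_top]
    refine lintegral_congr fun x => ?_
    rw [← lintegral_const_mul' _ _ ENNReal.ofReal_ne_top]
    exact lintegral_congr fun y => pointwise x y
  have step2 : ∀ x : EuclideanSpace ℝ (Fin d),
      (∫⁻ y : EuclideanSpace ℝ (Fin d), Hker d p α₁ α₂ β u (c • x) (c • y))
        = ENNReal.ofReal (c ^ (-(d : ℝ))) *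
            ∫⁻ y : EuclideanSpace ℝ (Fin d), Hker d p α₁ α₂ β u (c • x) y :=
    by
    intro x
    have hm : Measurable fun y : EuclideanSpace ℝ (Fin d) => Hker d p α₁ α₂ β u (c • x) y := by
      unfold Hker
      exact (((((continuous_const.sub hu).abs.measurable).pow measurable_const).mul
        ((measurable_const : Measurable fun _ : EuclideanSpace ℝ (Fin d) => ‖c • x‖ ^ α₁))).mul
        ((measurable_norm).pow measurable_const)).mul
        (((continuous_const.sub continuous_id).norm.measurable).pow measurable_const)
        |>.ennreal_ofReal
    exact aux_smul_lintegral hc hm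
  have hg : Measurable fun x : EuclideanSpace ℝ (Fin d) =>
      ∫⁻ y : EuclideanSpace ℝ (Fin d), Hker d p α₁ α₂ β u x y := hH.lintegral_prod_right'
  have step3 : (∫⁻ x : EuclideanSpace ℝ (Fin d), ∫⁻ y : EuclideanSpace ℝ (Fin d),
        Hker d p α₁ α₂ β u (c • x) (c • y))
      = ENNReal.ofReal (c ^ (-(d : ℝ))) * (ENNReal.ofReal (c ^ (-(d : ℝ))) *
          ∫⁻ x : EuclideanSpace ℝ (Fin d), ∫⁻ y : EuclideanSpace ℝ (Fin d),
            Hker d p α₁ α₂ β u x y) := by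
    simp_rw [step2]
    rw [lintegral_const_mul' _ _ ENNReal.ofReal_ne_top,
      aux_smul_lintegral hc hg]
  rw [step1, step3, ← mul_assoc, ← mul_assoc, ← ENNReal.ofReal_mul (by positivity),
    ← ENNReal.ofReal_mul (by positivity), ← Real.rpow_add hc, ← Real.rpow_add hc]

end Aux

/-- Theorem 1C: necessary condition for the fractional
derivative–difference Hardy–Sobolev inequality on `ℝ^d`. -/
theorem necessary_condition_derivative_difference_HS
    (d : ℕ) (hd : 1 ≤ d) (p s α₁ α₂ β μ : ℝ)
    (hp : 1 < p) (hs : 1 < s)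
    (K : ℝ) (hK : 0 < K)
    (hineq : ∀ u : EuclideanSpace ℝ (Fin d) → ℝ,
      ContDiff ℝ (⊤ : ℕ∞) u → HasCompactSupport u →
        HSright d p α₁ α₂ β u ≤ ENNReal.ofReal K * (HSgrad d s μ u) ^ (1 / s))
    (hex : ∃ u₀ : EuclideanSpace ℝ (Fin d) → ℝ,
      ContDiff ℝ (⊤ : ℕ∞) u₀ ∧ HasCompactSupport u₀ ∧
        0 < HSright d p α₁ α₂ β u₀ ∧ HSgrad d s μ u₀ < ⊤) :
    ((d : ℝ) - μ) / s - 1 = (2 * (d : ℝ) + α₁ + α₂ - β) / p := by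
  obtain ⟨u₀, hu₀, hcs, hApos, hBfin⟩ := hex
  have hp0 : (0 : ℝ) < p := lt_trans one_pos hp
  have hs0 : (0 : ℝ) < s := lt_trans one_pos hs
  set A : ℝ≥0∞ := HSright d p α₁ α₂ β u₀ with hA
  set B : ℝ≥0∞ := HSgrad d s μ u₀ with hB
  set C : ℝ≥0∞ := ENNReal.ofReal K * B ^ (1 / s) with hC
  have hA_le : A ≤ C := hineq u₀ hu₀ hcs
  have hCfin : C ≠ ⊤ := by
    refine ENNReal.mul_ne_top ENNReal.ofReal_ne_top ?_
    exact ENNReal.rpow_ne_top_of_nonneg (by positivity) hBfin.ne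
  have hAfin : A ≠ ⊤ := (lt_of_le_of_lt hA_le hCfin.lt_top).ne
  have hCpos : 0 < C := lt_of_lt_of_le hApos hA_le
  set e₁ : ℝ := (β - α₁ - α₂ + -(d : ℝ) + -(d : ℝ)) * (1 / p) with he₁
  set e₂ : ℝ := (s + μ + -(d : ℝ)) * (1 / s) with he₂
  -- the key scaling inequality
  have key : ∀ c : ℝ, 0 < c →
      (ENNReal.ofReal c) ^ e₁ * A ≤ (ENNReal.ofReal c) ^ e₂ * C := by
    intro c hc
    have hsmooth : ContDiff ℝ (⊤ : ℕ∞) (fun y => u₀ (c • y)) :=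
      hu₀.comp (contDiff_id.const_smul c)
    have hsupp : HasCompactSupport (fun y => u₀ (c • y)) := by
      have h := hcs.comp_homeomorph
        (Homeomorph.smul (Units.mk0 c hc.ne') (α := EuclideanSpace ℝ (Fin d)))
      exact h
    have h0 := hineq _ hsmooth hsupp
    have hR : HSright d p α₁ α₂ β (fun y => u₀ (c • y))
        = (ENNReal.ofReal c) ^ e₁ * A := by
      rw [HSright_eq, Hker_integral_smul p α₁ α₂ β u₀ hu₀.continuous hc,
        ENNReal.mul_rpow_of_nonneg _ _ (by positivity),
        ← ENNReal.ofReal_rpow_of_pos hc, ← ENNReal.rpow_mul, ← he₁, hA, HSright_eq]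
    have hG : ENNReal.ofReal K * (HSgrad d s μ (fun y => u₀ (c • y))) ^ (1 / s)
        = (ENNReal.ofReal c) ^ e₂ * C := by
      rw [HSgrad_comp_smul s μ u₀ hu₀ hc,
        ENNReal.mul_rpow_of_nonneg _ _ (by positivity),
        ← ENNReal.ofReal_rpow_of_pos hc, ← ENNReal.rpow_mul, ← he₂, hC, ← hB]
      ring
    rw [hR, hG] at h0
    exact h0
  have key2 : ∀ c : ℝ, 0 < c → A ≤ (ENNReal.ofReal c) ^ (-e₁ + e₂) * C := by
    intro c hc
    have hx0 : (ENNReal.ofReal c) ≠ 0 := by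
      simp [ENNReal.ofReal_eq_zero, not_le, hc]
    have hxt : (ENNReal.ofReal c) ≠ ⊤ := ENNReal.ofReal_ne_top
    calc A = (ENNReal.ofReal c) ^ (-e₁) * ((ENNReal.ofReal c) ^ e₁ * A) := by
          rw [← mul_assoc, ← ENNReal.rpow_add _ _ hx0 hxt, neg_add_cancel,
            ENNReal.rpow_zero, one_mul]
      _ ≤ (ENNReal.ofReal c) ^ (-e₁) * ((ENNReal.ofReal c) ^ e₂ * C) :=
          mul_le_mul_right (key c hc) _
      _ = (ENNReal.ofReal c) ^ (-e₁ + e₂) * C := by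
          rw [← mul_assoc, ← ENNReal.rpow_add _ _ hx0 hxt]
  set t : ℝ := -e₁ + e₂ with htdef
  have ht : t = 0 := by
    by_contra hne
    set a : ℝ := A.toReal with ha
    have hapos : 0 < a := ENNReal.toReal_pos hApos.ne' hAfin
    set cc : ℝ := C.toReal with hccdef
    have hccpos : 0 < cc := ENNReal.toReal_pos hCpos.ne' hCfin
    set lam : ℝ := (a / (2 * cc)) ^ (1 / t) with hlam
    have hlampos : 0 < lam := Real.rpow_pos_of_pos (by positivity) _
    have h1 : (ENNReal.ofReal lam) ^ t = ENNReal.ofReal (a / (2 * cc)) := by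
      rw [ENNReal.ofReal_rpow_of_pos hlampos, hlam, ← Real.rpow_mul (by positivity),
        one_div, inv_mul_cancel₀ hne, Real.rpow_one]
    have h2 := key2 lam hlampos
    rw [h1] at h2
    have hCcc : C = ENNReal.ofReal cc := (ENNReal.ofReal_toReal hCfin).symm
    have h3 : ENNReal.ofReal (a / (2 * cc)) * C = ENNReal.ofReal (a / 2) := by
      rw [hCcc, ← ENNReal.ofReal_mul (by positivity)]
      congr 1
      field_simp
    have hAa : A = ENNReal.ofReal a := (ENNReal.ofReal_toReal hAfin).symm
    rw [h3, hAa] at h2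
    have h4 : a ≤ a / 2 := (ENNReal.ofReal_le_ofReal_iff (by positivity)).mp h2
    linarith
  rw [htdef, he₁, he₂] at ht
  have hpne : p ≠ 0 := hp0.ne'
  have hsne : s ≠ 0 := hs0.ne'
  field_simp at ht ⊢
  nlinarith [ht, sq_nonneg (p*s)]
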